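/- arXiv:2304.08468 — 4 statements merged into one kernel-verified Lean document; each statement's English description precedes it below -/
import Mathlib

section
/- Let G be a finite bipartite graph with vertex bipartition V = A ∪ B satisfying |A| = |B|. Then G fails to have a perfect matching if and only if there exists a subset U ⊆ V such that the subgraph of G induced on U is connected, |U ∩ A| > |U ∩ B|, and every vertex of U that is adjacent in G to some vertex of V ∖ U belongs to B. -/
/-!
If there is no perfect matching, Hall's theorem for the side `A` (enough, as `|A| = |B|`) yields
`S ⊆ A` whose neighbourhood `N ⊆ B` is smaller than `S`. The excess of `A`-vertices over
`B`-vertices is positive on `S ∪ N`, hence on one of the connected components `U` of the graph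
induced on `S ∪ N`; the `A`-vertices of `U` lie in `S`, so all their neighbours stay in `U`.
Conversely, for such a `U` a perfect matching would map `U ∩ A` injectively into `U ∩ B`.
-/

open Finset

namespace SimpleGraph

variable {V : Type*} {G : SimpleGraph V}

theorem Subgraph.IsMatching.card_le_card {M : G.Subgraph} (hM : M.IsMatching) {S T : Finset V}
    (hS : ∀ s ∈ S, s ∈ M.verts) (hST : ∀ s ∈ S, ∀ v, M.Adj s v → v ∈ T) :
    #S ≤ #T :=
  card_le_card_of_forall_subsingleton M.Adj
    (fun s hs ↦ (hM (hS s hs)).exists.imp fun v hv ↦ ⟨hST s hs v hv, hv⟩)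
    (fun _ _ _ hu _ hw ↦ hM.eq_of_adj_right hu.2 hw.2)

theorem Subgraph.IsMatching.isPerfectMatching_of_subset_verts [Fintype V] [DecidableEq V]
    {A B : Finset V} (hG : G.IsBipartiteWith A B) (hAB : A ∪ B = univ) (hcard : #B ≤ #A)
    {M : G.Subgraph} (hM : M.IsMatching) (hA : ↑A ⊆ M.verts) : M.IsPerfectMatching := by
  classical
  have hB : {b ∈ B | b ∈ M.verts} = B := by
    refine eq_of_subset_of_card_le (filter_subset _ _) (hcard.trans ?_)
    exact hM.card_le_card (fun a ha ↦ hA ha) fun a ha v hav ↦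
      mem_filter.mpr ⟨hG.mem_of_mem_adj ha (M.adj_sub hav), M.edge_vert hav.symm⟩
  refine ⟨hM, fun v ↦ ?_⟩
  rcases mem_union.mp (hAB ▸ mem_univ v) with hv | hv
  · exact hA hv
  · exact (mem_filter.mp (hB.symm ▸ hv)).2

theorem exists_card_lt_of_not_exists_isPerfectMatching [Fintype V] [DecidableEq V]
    {A B : Finset V} (hG : G.IsBipartiteWith A B) (hAB : A ∪ B = univ) (hcard : #B ≤ #A)
    (h : ¬∃ M : G.Subgraph, M.IsPerfectMatching) :
    ∃ S N : Finset V,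
      S ⊆ A ∧ N ⊆ B ∧ (∀ u ∈ S, ∀ v, G.Adj u v → v ∈ N) ∧ #N < #S := by
  classical
  by_contra! hHall
  refine h ?_
  obtain ⟨M, hA, hM⟩ := exists_isMatching_of_forall_ncard_le hG fun s hs ↦ by
    rw [Set.ncard_eq_toFinset_card' s, Set.ncard_eq_toFinset_card']
    refine hHall s.toFinset _ (by simpa using hs) ?_ fun u hu v huv ↦ ?_
    · intro v hv
      obtain ⟨u, hu, huv⟩ := Set.mem_iUnion₂.mp (Set.mem_toFinset.mp hv)
      exact hG.mem_of_mem_adj (hs hu) huv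
    · exact Set.mem_toFinset.mpr (Set.mem_iUnion₂.mpr ⟨u, Set.mem_toFinset.mp hu, huv⟩)
  exact ⟨M, hM.isPerfectMatching_of_subset_verts hG hAB hcard hA⟩

theorem exists_connected_induce_of_card_inter_lt [Fintype V] [DecidableEq V] (G : SimpleGraph V)
    {W X Y : Finset V} (h : #(W ∩ Y) < #(W ∩ X)) :
    ∃ U ⊆ W, (G.induce (U : Set V)).Connected ∧ #(U ∩ Y) < #(U ∩ X) ∧
      ∀ u ∈ U, ∀ v ∈ W, G.Adj u v → v ∈ U := by
  classical
  -- the edges of `G` inside `W`: its components meeting `W` are those of `G[W]`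
  set H : SimpleGraph V := ((⊤ : G.Subgraph).induce W).spanningCoe
  have hH : ∀ {u v}, H.Adj u v ↔ u ∈ W ∧ v ∈ W ∧ G.Adj u v := by simp [H]
  let U (c : H.ConnectedComponent) : Finset V := {v ∈ W | H.connectedComponentMk v = c}
  have hsum (Z : Finset V) : #(W ∩ Z) = ∑ c, #(U c ∩ Z) := by
    rw [card_eq_sum_card_fiberwise (f := H.connectedComponentMk) (t := univ) (by simp)]
    refine sum_congr rfl fun c _ ↦ congrArg card ?_
    ext v
    simp only [U, mem_filter, mem_inter]
    tauto
  obtain ⟨c, -, hc⟩ := exists_lt_of_sum_lt (hsum Y ▸ hsum X ▸ h)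
  have hU : (U c : Set V) = c.supp := by
    obtain ⟨w, hw⟩ := (card_pos.mp (Nat.zero_lt_of_lt hc)).mono inter_subset_left
    ext v
    simp only [U, coe_filter, Set.mem_ofPred_eq, ConnectedComponent.mem_supp_iff,
      and_iff_right_iff_imp]
    intro hv
    obtain ⟨p⟩ : H.Reachable v w :=
      ConnectedComponent.exact (hv.trans (mem_filter.mp hw).2.symm)
    cases p with
    | nil => exact (mem_filter.mp hw).1
    | cons hadj _ => exact (hH.mp hadj).1
  refine ⟨U c, filter_subset _ _, ?_, hc, fun u hu v hv huv ↦ ?_⟩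
  · rw [hU]
    exact c.connected_toSimpleGraph.mono fun u v huv ↦ (hH.mp huv).2.2
  · have hu' := mem_filter.mp hu
    refine mem_filter.mpr ⟨hv, ?_⟩
    rw [← hu'.2]
    exact (ConnectedComponent.sound (hH.mpr ⟨hu'.1, hv, huv⟩).reachable).symm

end SimpleGraph

open SimpleGraph

/-- **Hall-type counterexample criterion for perfect matchings.**
Let `G` be a finite bipartite graph with bipartition `V = A ∪ B` and `|A| = |B|`.
Then `G` fails to have a perfect matching iff there is a subset `U` of the vertices such that
the induced subgraph on `U` is connected, `|U ∩ A| > |U ∩ B|`, and every vertex of `U`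
adjacent to some vertex outside `U` belongs to `B`. -/
theorem statement0 {V : Type} [Fintype V] [DecidableEq V] (G : SimpleGraph V)
    (A B : Finset V) (hdisj : Disjoint A B) (hunion : A ∪ B = Finset.univ)
    (hbip : ∀ u v : V, G.Adj u v → (u ∈ A ∧ v ∈ B) ∨ (u ∈ B ∧ v ∈ A))
    (hcard : A.card = B.card) :
    (¬ ∃ M : SimpleGraph.Subgraph G, M.IsPerfectMatching) ↔
      ∃ U : Finset V,
        (SimpleGraph.induce (↑U : Set V) G).Connected ∧
        (U ∩ B).card < (U ∩ A).card ∧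
        ∀ u ∈ U, (∃ v : V, v ∉ U ∧ G.Adj u v) → u ∈ B := by
  have hG : G.IsBipartiteWith A B :=
    ⟨disjoint_coe.mpr hdisj, fun u v huv ↦ by simpa using hbip u v huv⟩
  constructor
  · intro hno
    obtain ⟨S, N, hSA, hNB, hnbr, hlt⟩ :=
      exists_card_lt_of_not_exists_isPerfectMatching hG hunion hcard.ge hno
    have hWA : (S ∪ N) ∩ A = S := by
      ext v; have := Finset.disjoint_left.mp hdisj; grind
    have hWB : (S ∪ N) ∩ B = N := by
      ext v; have := Finset.disjoint_left.mp hdisj; grind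
    obtain ⟨U, hUW, hconn, hU, hclosed⟩ :=
      G.exists_connected_induce_of_card_inter_lt (W := S ∪ N) (X := A) (Y := B)
        (by rwa [hWA, hWB])
    refine ⟨U, hconn, hU, fun u hu ⟨v, hvU, huv⟩ ↦ ?_⟩
    by_contra huB
    have huA : u ∈ A := (mem_union.mp (hunion ▸ mem_univ u)).resolve_right huB
    have huS : u ∈ S := hWA ▸ mem_inter.mpr ⟨hUW hu, huA⟩
    exact hvU (hclosed u hu v (mem_union_right _ (hnbr u huS v huv)) huv)
  · rintro ⟨U, -, hU, hboundary⟩ ⟨M, hM⟩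
    refine hU.not_ge (hM.1.card_le_card (fun a _ ↦ hM.2 a) fun a ha v hav ↦ ?_)
    obtain ⟨haU, haA⟩ := mem_inter.mp ha
    have huv := M.adj_sub hav
    refine mem_inter.mpr ⟨?_, hG.mem_of_mem_adj haA huv⟩
    by_contra hvU
    exact Finset.disjoint_left.mp hdisj haA (hboundary a haU ⟨v, hvU, huv⟩)
end

section
/- Let U be a finite subset of ℤ³. Let ∂U denote the set of ordered pairs (u,v) with u ∈ U, v ∈ ℤ³ ∖ U, and u adjacent to v in the grid graph; call a pair (u,v) ∈ ∂U white if u is even and black if u is odd. Then 6·(#{even vertices in U} − #{odd vertices in U}) = #{white pairs in ∂U} − #{black pairs in ∂U}. -/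
open MeasureTheory Filter

namespace Dimers

/-- Vertices of the grid graph on `ℤ³`. -/
abbrev V : Type := Fin 3 → ℤ

/-- The `i`-th standard unit vector of `ℤ³`. -/
def unitVec (i : Fin 3) : V := fun j => if j = i then 1 else 0

/-- Grid adjacency: two vertices are adjacent iff they differ by a standard unit vector. -/
def Adj (x y : V) : Prop := ∃ i : Fin 3, y = x + unitVec i ∨ x = y + unitVec i

/-- A vertex is even if its coordinate sum is even. -/
def IsEven (x : V) : Prop := (x 0 + x 1 + x 2) % 2 = 0

instance : DecidablePred IsEven := fun x =>
  inferInstanceAs (Decidable ((x 0 + x 1 + x 2) % 2 = 0))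

/-- A dimer tiling (perfect matching) of `ℤ³`, encoded by the involution sending each vertex
to the vertex it is matched with. -/
def IsTiling (m : V → V) : Prop := (∀ x, Adj x (m x)) ∧ ∀ x, m (m x) = x

/-- `Omega` is the space of dimer tilings of `ℤ³`. -/
abbrev Omega : Type := {m : V → V // IsTiling m}

def D : Finset V := {unitVec 0, unitVec 1, unitVec 2, -unitVec 0, -unitVec 1, -unitVec 2}

lemma card_D : D.card = 6 := by decide

def nbrs (u : V) : Finset V := D.image (u + ·)

lemma card_nbrs (u : V) : (nbrs u).card = 6 := by
  rw [nbrs, Finset.card_image_of_injective _ (add_right_injective u), card_D]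

lemma mem_nbrs {u v : V} : v ∈ nbrs u ↔ Adj u v := by
  simp only [nbrs, D, Finset.mem_image, Finset.mem_insert, Finset.mem_singleton, Adj]
  constructor
  · rintro ⟨d, hd, rfl⟩
    rcases hd with rfl|rfl|rfl|rfl|rfl|rfl
    exacts [⟨0, Or.inl rfl⟩, ⟨1, Or.inl rfl⟩, ⟨2, Or.inl rfl⟩,
      ⟨0, Or.inr (by abel)⟩, ⟨1, Or.inr (by abel)⟩, ⟨2, Or.inr (by abel)⟩]
  · rintro ⟨i, rfl | h⟩
    · exact ⟨unitVec i, by fin_cases i <;> simp, rfl⟩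
    · exact ⟨-(unitVec i), by fin_cases i <;> simp, by rw [h]; abel⟩

lemma adj_parity {x y : V} (h : Adj x y) : IsEven x ↔ ¬ IsEven y := by
  obtain ⟨i, rfl | rfl⟩ := h <;> fin_cases i <;>
    simp [IsEven, unitVec, Pi.add_apply] <;> omega

lemma adj_symm {x y : V} (h : Adj x y) : Adj y x := by
  obtain ⟨i, h | h⟩ := h
  · exact ⟨i, Or.inr h⟩
  · exact ⟨i, Or.inl h⟩

/-- sign of a vertex -/
def sgn (x : V) : ℤ := if IsEven x then 1 else -1


lemma sum_pm {α : Type*} (T : Finset α) (q : α → Prop) [DecidablePred q] (g : α → ℤ)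
    (hg : ∀ a, g a = if q a then 1 else -1) :
    ∑ a ∈ T, g a = ((T.filter q).card : ℤ) - ((T.filter (fun a => ¬ q a)).card : ℤ) := by
  classical
  rw [← Finset.sum_filter_add_sum_filter_not T q]
  have e1 : ∑ a ∈ T.filter q, g a = ((T.filter q).card : ℤ) := by
    rw [Finset.sum_congr rfl (g := fun _ => (1 : ℤ))
      (fun a ha => by rw [hg]; simp [(Finset.mem_filter.1 ha).2])]
    simp
  have e2 : ∑ a ∈ T.filter (fun a => ¬ q a), g a
      = -((T.filter (fun a => ¬ q a)).card : ℤ) := by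
    rw [Finset.sum_congr rfl (g := fun _ => (-1 : ℤ))
      (fun a ha => by rw [hg]; simp [(Finset.mem_filter.1 ha).2])]
    simp
  rw [e1, e2]; ring


/-- **Imbalance formula.** For a finite set `U ⊆ ℤ³`, six times the surplus of even vertices
in `U` over odd vertices in `U` equals the number of white boundary pairs minus the number
of black boundary pairs, where a boundary pair `(u,v)` has `u ∈ U`, `v ∉ U`, `u` adjacent
to `v`, and it is white if `u` is even and black if `u` is odd. -/
theorem statement1 (U : Set V) (hU : U.Finite) :
    6 * ((({x ∈ U | IsEven x}).ncard : ℤ) - (({x ∈ U | ¬ IsEven x}).ncard : ℤ)) =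
      (({p : V × V | p.1 ∈ U ∧ p.2 ∉ U ∧ Adj p.1 p.2 ∧ IsEven p.1}).ncard : ℤ) -
        (({p : V × V | p.1 ∈ U ∧ p.2 ∉ U ∧ Adj p.1 p.2 ∧ ¬ IsEven p.1}).ncard : ℤ) := by
  classical
  set S := hU.toFinset with hS
  set P : Finset (V × V) := S.biUnion (fun u => (nbrs u).image (fun v => (u, v))) with hP
  have memP : ∀ p : V × V, p ∈ P ↔ p.1 ∈ U ∧ Adj p.1 p.2 := by
    rintro ⟨a, b⟩
    simp only [hP, Finset.mem_biUnion, Finset.mem_image, mem_nbrs, hS,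
      Set.Finite.mem_toFinset, Prod.mk.injEq]
    constructor
    · rintro ⟨u, hu, v, hv, rfl, rfl⟩; exact ⟨hu, hv⟩
    · rintro ⟨ha, hb⟩; exact ⟨a, ha, b, hb, rfl, rfl⟩
  -- total sum over all pairs
  have hdisj : (S : Set V).PairwiseDisjoint (fun u => (nbrs u).image (fun v => (u, v))) := by
    intro u _ w _ huw
    refine Finset.disjoint_left.mpr ?_
    rintro ⟨a, b⟩ ha hb
    simp only [Finset.mem_image, Prod.mk.injEq] at ha hb
    obtain ⟨_, _, rfl, _⟩ := ha
    obtain ⟨_, _, h, _⟩ := hb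
    exact huw h.symm
  have h1 : ∑ p ∈ P, sgn p.1 = 6 * ∑ u ∈ S, sgn u := by
    rw [hP, Finset.sum_biUnion hdisj, Finset.mul_sum]
    refine Finset.sum_congr rfl fun u hu => ?_
    rw [Finset.sum_image (by simp)]
    simp [card_nbrs, mul_comm]
  -- split into boundary and internal
  set Pb := P.filter (fun p => p.2 ∉ U) with hPb
  have h2 : ∑ p ∈ P, sgn p.1
      = ∑ p ∈ Pb, sgn p.1 + ∑ p ∈ P.filter (fun p => ¬ p.2 ∉ U), sgn p.1 :=
    (Finset.sum_filter_add_sum_filter_not P _ _).symm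
  have h3 : ∑ p ∈ P.filter (fun p => ¬ p.2 ∉ U), sgn p.1 = 0 := by
    refine Finset.sum_involution (fun p _ => (p.2, p.1)) ?_ ?_ ?_ ?_
    · intro p hp
      simp only [Finset.mem_filter, not_not, memP] at hp
      have := adj_parity hp.1.2
      simp only [sgn]
      by_cases h : IsEven p.1
      · rw [if_pos h, if_neg (this.mp h)]; ring
      · rw [if_neg h, if_pos (by by_contra hc; exact h (this.mpr hc))]; ring
    · intro p hp _
      simp only [Finset.mem_filter, not_not, memP] at hp
      intro hc
      have h1 : p.2 = p.1 := congrArg Prod.fst hc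
      have := adj_parity hp.1.2
      rw [h1] at this
      tauto
    · intro p hp
      simp only [Finset.mem_filter, not_not, memP] at hp ⊢
      exact ⟨⟨hp.2, adj_symm hp.1.2⟩, hp.1.1⟩
    · intro p _; rfl
  -- boundary sum = white - black
  have h4 := sum_pm Pb (fun p => IsEven p.1) (fun p => sgn p.1) (fun _ => rfl)
  -- identify the set ncards with finset cards
  have eW : {p : V × V | p.1 ∈ U ∧ p.2 ∉ U ∧ Adj p.1 p.2 ∧ IsEven p.1}
      = ↑(Pb.filter (fun p => IsEven p.1)) := by
    ext p
    simp only [Set.mem_setOf_eq, Finset.coe_filter, hPb, Finset.mem_filter, memP,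
      Set.mem_setOf_eq]
    tauto
  have eB : {p : V × V | p.1 ∈ U ∧ p.2 ∉ U ∧ Adj p.1 p.2 ∧ ¬ IsEven p.1}
      = ↑(Pb.filter (fun p => ¬ IsEven p.1)) := by
    ext p
    simp only [Set.mem_setOf_eq, Finset.coe_filter, hPb, Finset.mem_filter, memP,
      Set.mem_setOf_eq]
    tauto
  have eE : {x ∈ U | IsEven x} = ↑(S.filter IsEven) := by
    ext x; simp [hS]
  have eO : {x ∈ U | ¬ IsEven x} = ↑(S.filter (fun u => ¬ IsEven u)) := by
    ext x; simp [hS]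
  rw [eW, eB, eE, eO, Set.ncard_coe_finset, Set.ncard_coe_finset,
    Set.ncard_coe_finset, Set.ncard_coe_finset]
  have := h1.symm.trans (h2.trans (by rw [h3, add_zero, h4]))
  rw [sum_pm S IsEven sgn (fun _ => rfl)] at this
  linarith

end Dimers
end

section
/- Let γ be a simple closed curve in ℤ³, i.e., a cyclic sequence x₀, x₁, …, x_{k−1}, x_k = x₀ of vertices of ℤ³ (k ≥ 4) with x₀, …, x_{k−1} pairwise distinct and each consecutive pair adjacent in the grid graph; its length is k and its edge set is E(γ) = {{x_j, x_{j+1}} : 0 ≤ j < k}. Then there exists a finite set S of unit lattice squares with ∂S = E(γ) and |S| ≤ (1/8)·k². -/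
open MeasureTheory Filter

namespace Dimers

/-- A unit lattice square is encoded by a triple `(x, i, j)` (with `i < j` imposed where
used); `squareEdges` is the set of its four boundary grid edges. -/
def squareEdges (q : V × Fin 3 × Fin 3) : Finset (Sym2 V) :=
  {s(q.1, q.1 + unitVec q.2.1), s(q.1, q.1 + unitVec q.2.2),
    s(q.1 + unitVec q.2.1, q.1 + unitVec q.2.1 + unitVec q.2.2),
    s(q.1 + unitVec q.2.2, q.1 + unitVec q.2.1 + unitVec q.2.2)}

namespace Iso

abbrev Sq := V × Fin 3 × Fin 3

noncomputable def upd (w : V) (m : Fin 3) (z : ℤ) : V := Function.update w m z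

@[simp] lemma upd_same (w : V) (m : Fin 3) (z : ℤ) : upd w m z m = z := by
  simp [upd]

@[simp] lemma upd_ne (w : V) (m j : Fin 3) (z : ℤ) (h : j ≠ m) : upd w m z j = w j := by
  simp [upd, Function.update_of_ne h]

@[simp] lemma unitVec_same (i : Fin 3) : unitVec i i = 1 := by simp [unitVec]

@[simp] lemma unitVec_ne (i j : Fin 3) (h : j ≠ i) : unitVec i j = 0 := by simp [unitVec, h]

lemma upd_add_unitVec (w : V) (m : Fin 3) (z : ℤ) :
    upd w m z + unitVec m = upd w m (z + 1) := by
  funext j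
  by_cases h : j = m
  · subst h; simp [Pi.add_apply]
  · simp [Pi.add_apply, h]

lemma upd_add_unitVec_ne (w : V) (m i : Fin 3) (h : i ≠ m) (z : ℤ) :
    upd w m z + unitVec i = upd (w + unitVec i) m z := by
  funext j
  by_cases hj : j = m
  · subst hj; simp [Pi.add_apply, unitVec_ne _ _ (Ne.symm h)]
  · simp [Pi.add_apply, hj]

lemma add_unitVec_ne_self (x : V) (i : Fin 3) : x + unitVec i ≠ x := by
  intro h
  have := congrFun h i
  simp [Pi.add_apply] at this

lemma unitVec_inj {i m : Fin 3} (h : unitVec i = unitVec m) : i = m := by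
  by_contra hne
  have := congrFun h i
  rw [unitVec_same, unitVec_ne m i hne] at this
  exact one_ne_zero this

/-! ### chains mod 2 -/

noncomputable def ind (f e : Sym2 V) : ZMod 2 := if e = f then 1 else 0

noncomputable def cnt (S : Finset Sq) (e : Sym2 V) : ZMod 2 :=
  ((S.filter fun q => e ∈ squareEdges q).card : ZMod 2)

lemma cnt_eq_sum (S : Finset Sq) (e : Sym2 V) :
    cnt S e = ∑ q ∈ S, (if e ∈ squareEdges q then (1 : ZMod 2) else 0) := by
  rw [cnt, Finset.card_filter, Nat.cast_sum]
  simp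

lemma cnt_union (S T : Finset Sq) (h : Disjoint S T) (e : Sym2 V) :
    cnt (S ∪ T) e = cnt S e + cnt T e := by
  rw [cnt_eq_sum, cnt_eq_sum, cnt_eq_sum, Finset.sum_union h]

noncomputable def segX (w : V) (m : Fin 3) (z1 z2 : ℤ) (e : Sym2 V) : ZMod 2 :=
  ∑ z ∈ Finset.Ico (min z1 z2) (max z1 z2), ind s(upd w m z, upd w m (z + 1)) e

noncomputable def fillCol (w : V) (i m : Fin 3) (z1 z2 : ℤ) : Finset Sq :=
  (Finset.Ico (min z1 z2) (max z1 z2)).image fun z => (upd w m z, i, m)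

lemma mem_squareEdges_ind (x : V) (i m : Fin 3) (him : i ≠ m) (e : Sym2 V) :
    (if e ∈ squareEdges (x, i, m) then (1 : ZMod 2) else 0)
      = ind s(x, x + unitVec i) e + ind s(x, x + unitVec m) e
        + ind s(x + unitVec i, x + unitVec i + unitVec m) e
        + ind s(x + unitVec m, x + unitVec i + unitVec m) e := by
  have hxi : x + unitVec i ≠ x := add_unitVec_ne_self x i
  have hxm : x + unitVec m ≠ x := add_unitVec_ne_self x m
  have him' : x + unitVec i ≠ x + unitVec m := fun h => him (unitVec_inj (add_left_cancel h))
  have h2 : x + unitVec i + unitVec m ≠ x := by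
    intro h
    have := congrFun h i
    simp [Pi.add_apply, unitVec_ne m i him] at this
  have h3 : x + unitVec i + unitVec m ≠ x + unitVec i := add_unitVec_ne_self _ m
  have h4 : x + unitVec i + unitVec m ≠ x + unitVec m := by
    rw [add_right_comm]; exact add_unitVec_ne_self _ i
  have e1 : s(x, x + unitVec i) ≠ s(x, x + unitVec m) := by
    intro h
    rcases Sym2.eq_iff.mp h with ⟨-, h'⟩ | ⟨h', -⟩
    · exact him' h'
    · exact hxm h'.symm
  have e2 : s(x, x + unitVec i) ≠ s(x + unitVec i, x + unitVec i + unitVec m) := by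
    intro h
    rcases Sym2.eq_iff.mp h with ⟨h', -⟩ | ⟨h', -⟩
    · exact hxi h'.symm
    · exact h2 h'.symm
  have e3 : s(x, x + unitVec i) ≠ s(x + unitVec m, x + unitVec i + unitVec m) := by
    intro h
    rcases Sym2.eq_iff.mp h with ⟨h', -⟩ | ⟨h', -⟩
    · exact hxm h'.symm
    · exact h2 h'.symm
  have e4 : s(x, x + unitVec m) ≠ s(x + unitVec i, x + unitVec i + unitVec m) := by
    intro h
    rcases Sym2.eq_iff.mp h with ⟨h', -⟩ | ⟨h', -⟩
    · exact hxi h'.symm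
    · exact h2 h'.symm
  have e5 : s(x, x + unitVec m) ≠ s(x + unitVec m, x + unitVec i + unitVec m) := by
    intro h
    rcases Sym2.eq_iff.mp h with ⟨h', -⟩ | ⟨h', -⟩
    · exact hxm h'.symm
    · exact h2 h'.symm
  have e6 : s(x + unitVec i, x + unitVec i + unitVec m)
      ≠ s(x + unitVec m, x + unitVec i + unitVec m) := by
    intro h
    rcases Sym2.eq_iff.mp h with ⟨h', -⟩ | ⟨-, h'⟩
    · exact him' h'
    · exact h4 h'
  simp only [squareEdges, Finset.mem_insert, Finset.mem_singleton, ind]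
  split_ifs with h1 c1 c2 c3 c4 <;>
    first
      | decide
      | simp_all
      | tauto

lemma telescope (l : ℤ) (g : ℤ → ZMod 2) :
    ∀ r, l ≤ r → ∑ z ∈ Finset.Ico l r, (g z + g (z + 1)) = g l + g r := by
  refine Int.le_induction ?_ ?_
  · rw [Finset.Ico_self, Finset.sum_empty]
    exact (CharTwo.add_self_eq_zero _).symm
  · intro n hn ih
    have hins : Finset.Ico l (n + 1) = insert n (Finset.Ico l n) := by
      ext t; simp only [Finset.mem_Ico, Finset.mem_insert]; omega
    rw [hins, Finset.sum_insert Finset.right_notMem_Ico, ih]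
    have : g n + g (n + 1) + (g l + g n) = g l + g (n + 1) + (g n + g n) := by ring
    rw [this, CharTwo.add_self_eq_zero, add_zero]


lemma addswap2 (a c : ZMod 2) : a + (c + a) = c := by
  rw [add_comm c a, ← add_assoc, CharTwo.add_self_eq_zero, zero_add]

lemma addswap3 (c a : ZMod 2) : c + a + a = c := by
  rw [add_assoc, CharTwo.add_self_eq_zero, add_zero]

lemma segX_step (w : V) (m : Fin 3) (z t : ℤ) (e : Sym2 V) :
    segX w m z t e + segX w m z (t + 1) e = ind s(upd w m t, upd w m (t + 1)) e := by
  rcases le_or_gt z t with h | h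
  · have h1 : min z t = z := min_eq_left h
    have h2 : max z t = t := max_eq_right h
    have h3 : min z (t + 1) = z := min_eq_left (by omega)
    have h4 : max z (t + 1) = t + 1 := max_eq_right (by omega)
    have hins : Finset.Ico z (t + 1) = insert t (Finset.Ico z t) := by
      ext s; simp only [Finset.mem_Ico, Finset.mem_insert]; omega
    rw [segX, segX, h1, h2, h3, h4, hins, Finset.sum_insert Finset.right_notMem_Ico]
    exact addswap2 _ _
  · have h1 : min z t = t := min_eq_right (by omega)
    have h2 : max z t = z := max_eq_left (by omega)
    have h3 : min z (t + 1) = t + 1 := min_eq_right (by omega)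
    have h4 : max z (t + 1) = z := max_eq_left (by omega)
    have hins : Finset.Ico t z = insert t (Finset.Ico (t + 1) z) := by
      ext s; simp only [Finset.mem_Ico, Finset.mem_insert]; omega
    rw [segX, segX, h1, h2, h3, h4, hins,
      Finset.sum_insert (by simp [Finset.mem_Ico])]
    exact addswap3 _ _

lemma cnt_fillCol (w : V) (i m : Fin 3) (him : i ≠ m) (z1 z2 : ℤ) (e : Sym2 V) :
    cnt (fillCol w i m z1 z2) e =
      ind s(upd w m z1, upd w m z1 + unitVec i) e
        + ind s(upd w m z2, upd w m z2 + unitVec i) e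
        + segX w m z1 z2 e + segX (w + unitVec i) m z1 z2 e := by
  rw [upd_add_unitVec_ne w m i him, upd_add_unitVec_ne w m i him]
  have hinj : Set.InjOn (fun z => ((upd w m z, i, m) : Sq))
      (Finset.Ico (min z1 z2) (max z1 z2)) := by
    intro s _ t _ hst
    have := congrArg (fun q : Sq => q.1 m) hst
    simpa using this
  rw [cnt_eq_sum, fillCol, Finset.sum_image hinj]
  have hterm : ∀ z : ℤ, (if e ∈ squareEdges (upd w m z, i, m) then (1 : ZMod 2) else 0)
      = (ind s(upd w m z, upd (w + unitVec i) m z) e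
          + ind s(upd w m (z+1), upd (w + unitVec i) m (z+1)) e)
        + (ind s(upd w m z, upd w m (z+1)) e
          + ind s(upd (w + unitVec i) m z, upd (w + unitVec i) m (z+1)) e) := by
    intro z
    rw [mem_squareEdges_ind _ _ _ him]
    rw [upd_add_unitVec_ne w m i him, upd_add_unitVec w m z,
      upd_add_unitVec (w + unitVec i) m z]
    ring
  rw [Finset.sum_congr rfl (fun z _ => hterm z), Finset.sum_add_distrib]
  have htel : ∑ z ∈ Finset.Ico (min z1 z2) (max z1 z2),
      (ind s(upd w m z, upd (w + unitVec i) m z) e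
        + ind s(upd w m (z+1), upd (w + unitVec i) m (z+1)) e)
      = ind s(upd w m z1, upd (w + unitVec i) m z1) e
        + ind s(upd w m z2, upd (w + unitVec i) m z2) e := by
    rw [telescope (min z1 z2) (fun t => ind s(upd w m t, upd (w + unitVec i) m t) e)
      (max z1 z2) min_le_max]
    rcases le_total z1 z2 with h | h
    · rw [min_eq_left h, max_eq_right h]
    · rw [min_eq_right h, max_eq_left h, add_comm]
  rw [htel]
  have hseg : ∑ z ∈ Finset.Ico (min z1 z2) (max z1 z2),
      (ind s(upd w m z, upd w m (z+1)) e
        + ind s(upd (w + unitVec i) m z, upd (w + unitVec i) m (z+1)) e)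
      = segX w m z1 z2 e + segX (w + unitVec i) m z1 z2 e := by
    rw [Finset.sum_add_distrib]; rfl
  rw [hseg]; ring

/-! ### concrete points, fills, paths -/

def pt (p q r : ℤ) : V := ![p, q, r]

@[simp] lemma pt_0 (p q r : ℤ) : pt p q r 0 = p := rfl
@[simp] lemma pt_1 (p q r : ℤ) : pt p q r 1 = q := rfl
@[simp] lemma pt_2 (p q r : ℤ) : pt p q r 2 = r := rfl

noncomputable def fill (a u : V) (i : Fin 3) : Finset Sq :=
  if i = 0 then
    fillCol (pt (u 0) 0 (a 2)) 0 1 (a 1) (u 1) ∪ fillCol (pt (u 0) (u 1) 0) 0 2 (a 2) (u 2)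
  else if i = 1 then fillCol (pt (u 0) (u 1) 0) 1 2 (a 2) (u 2)
  else ∅

noncomputable def pathX (a v : V) (e : Sym2 V) : ZMod 2 :=
  segX (pt 0 (a 1) (a 2)) 0 (a 0) (v 0) e + segX (pt (v 0) 0 (a 2)) 1 (a 1) (v 1) e
    + segX (pt (v 0) (v 1) 0) 2 (a 2) (v 2) e

lemma coord_add (u : V) (i j : Fin 3) : (u + unitVec i) j = u j + unitVec i j := rfl

lemma fin3_cases : ∀ j : Fin 3, j = 0 ∨ j = 1 ∨ j = 2 := by decide

lemma fillCol_dirs (w : V) (i m : Fin 3) (z1 z2 : ℤ) (q : Sq)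
    (hq : q ∈ fillCol w i m z1 z2) : q.2 = (i, m) := by
  simp only [fillCol, Finset.mem_image] at hq
  obtain ⟨z, _, rfl⟩ := hq; rfl

lemma fill_dirs (a u : V) (i : Fin 3) (q : Sq) (hq : q ∈ fill a u i) : q.2.1 < q.2.2 := by
  rcases fin3_cases i with rfl | rfl | rfl
  · rw [fill, if_pos rfl, Finset.mem_union] at hq
    rcases hq with hq | hq
    · rw [fillCol_dirs _ _ _ _ _ _ hq]; decide
    · rw [fillCol_dirs _ _ _ _ _ _ hq]; decide
  · rw [fill, if_neg (by decide), if_pos rfl] at hq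
    rw [fillCol_dirs _ _ _ _ _ _ hq]; decide
  · rw [fill, if_neg (by decide), if_neg (by decide)] at hq
    exact absurd hq (Finset.notMem_empty q)

lemma cnt_fill (a u : V) (i : Fin 3) (e : Sym2 V) :
    cnt (fill a u i) e
      = pathX a u e + pathX a (u + unitVec i) e + ind s(u, u + unitVec i) e := by
  rcases fin3_cases i with rfl | rfl | rfl
  · -- direction 0
    have c0 : (u + unitVec 0) 0 = u 0 + 1 := by rw [coord_add]; simp
    have c1 : (u + unitVec 0) 1 = u 1 := by rw [coord_add]; simp [unitVec_ne 0 1 (by decide)]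
    have c2 : (u + unitVec 0) 2 = u 2 := by rw [coord_add]; simp [unitVec_ne 0 2 (by decide)]
    have hdisj : Disjoint (fillCol (pt (u 0) 0 (a 2)) 0 1 (a 1) (u 1))
        (fillCol (pt (u 0) (u 1) 0) 0 2 (a 2) (u 2)) := by
      rw [Finset.disjoint_left]
      intro q h1 h2
      have e1 := fillCol_dirs _ _ _ _ _ _ h1
      have e2 := fillCol_dirs _ _ _ _ _ _ h2
      rw [e1] at e2
      exact absurd e2 (by decide)
    have hfill : fill a u 0 = fillCol (pt (u 0) 0 (a 2)) 0 1 (a 1) (u 1)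
        ∪ fillCol (pt (u 0) (u 1) 0) 0 2 (a 2) (u 2) := by
      rw [fill, if_pos rfl]
    rw [hfill, cnt_union _ _ hdisj, cnt_fillCol _ _ _ (by decide),
      cnt_fillCol _ _ _ (by decide), pathX, pathX, c0, c1, c2]
    have hstep0 := segX_step (pt 0 (a 1) (a 2)) 0 (a 0) (u 0) e
    have idA : upd (pt 0 (a 1) (a 2)) 0 (u 0) = upd (pt (u 0) 0 (a 2)) 1 (a 1) := by
      funext j; fin_cases j <;> simp
    have idB : upd (pt 0 (a 1) (a 2)) 0 (u 0 + 1) = upd (pt (u 0) 0 (a 2)) 1 (a 1) + unitVec 0 := by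
      rw [upd_add_unitVec_ne _ _ _ (by decide)]
      funext j; fin_cases j <;>
        simp [coord_add, unitVec_ne 0 1 (by decide), unitVec_ne 0 2 (by decide)]
    rw [idA, idB] at hstep0
    rw [← hstep0]
    have idD : upd (pt (u 0) 0 (a 2)) 1 (u 1) = upd (pt (u 0) (u 1) 0) 2 (a 2) := by
      funext j; fin_cases j <;> simp
    have idC : pt (u 0 + 1) 0 (a 2) = pt (u 0) 0 (a 2) + unitVec 0 := by
      funext j; fin_cases j <;>
        simp [coord_add, unitVec_ne 0 1 (by decide), unitVec_ne 0 2 (by decide)]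
    have idF : pt (u 0 + 1) (u 1) 0 = pt (u 0) (u 1) 0 + unitVec 0 := by
      funext j; fin_cases j <;>
        simp [coord_add, unitVec_ne 0 1 (by decide), unitVec_ne 0 2 (by decide)]
    have idG : upd (pt (u 0) (u 1) 0) 2 (u 2) = u := by
      funext j; fin_cases j <;> simp
    rw [idD, idC, idF, idG]
    ring_nf
    simp [mul_two, CharTwo.add_self_eq_zero]
  · -- direction 1
    have c0 : (u + unitVec 1) 0 = u 0 := by rw [coord_add]; simp [unitVec_ne 1 0 (by decide)]
    have c1 : (u + unitVec 1) 1 = u 1 + 1 := by rw [coord_add]; simp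
    have c2 : (u + unitVec 1) 2 = u 2 := by rw [coord_add]; simp [unitVec_ne 1 2 (by decide)]
    have hb : (1 : Fin 3) ≠ 2 := by decide
    have hfill : fill a u 1 = fillCol (pt (u 0) (u 1) 0) 1 2 (a 2) (u 2) := by
      simp [fill]
    rw [hfill, cnt_fillCol _ _ _ hb, pathX, pathX, c0, c1, c2]
    have hstep := segX_step (pt (u 0) 0 (a 2)) 1 (a 1) (u 1) e
    have id1 : upd (pt (u 0) (u 1) 0) 2 (a 2) = upd (pt (u 0) 0 (a 2)) 1 (u 1) := by
      funext j; fin_cases j <;> simp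
    have id2 : upd (pt (u 0) (u 1) 0) 2 (a 2) + unitVec 1 = upd (pt (u 0) 0 (a 2)) 1 (u 1 + 1) := by
      rw [id1, upd_add_unitVec]
    have id3 : pt (u 0) (u 1 + 1) 0 = pt (u 0) (u 1) 0 + unitVec 1 := by
      funext j; fin_cases j <;> simp [coord_add, unitVec_ne 1 0 (by decide), unitVec_ne 1 2 (by decide)]
    have id4 : upd (pt (u 0) (u 1) 0) 2 (u 2) = u := by
      funext j; fin_cases j <;> simp
    have id5 : upd (pt (u 0) (u 1) 0) 2 (u 2) + unitVec 1 = u + unitVec 1 := by rw [id4]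
    rw [id1, upd_add_unitVec, id5, id4, ← id3, ← hstep]
    ring_nf
    simp [mul_two, CharTwo.add_self_eq_zero]
  · -- direction 2
    have c0 : (u + unitVec 2) 0 = u 0 := by rw [coord_add]; simp [unitVec_ne 2 0 (by decide)]
    have c1 : (u + unitVec 2) 1 = u 1 := by rw [coord_add]; simp [unitVec_ne 2 1 (by decide)]
    have c2 : (u + unitVec 2) 2 = u 2 + 1 := by rw [coord_add]; simp
    have hfill : fill a u 2 = (∅ : Finset Sq) := by simp [fill]
    rw [hfill, pathX, pathX, c0, c1, c2]
    have hstep := segX_step (pt (u 0) (u 1) 0) 2 (a 2) (u 2) e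
    have id4 : upd (pt (u 0) (u 1) 0) 2 (u 2) = u := by
      funext j; fin_cases j <;> simp
    have id5 : upd (pt (u 0) (u 1) 0) 2 (u 2 + 1) = u + unitVec 2 := by
      rw [← upd_add_unitVec, id4]
    rw [id4, id5] at hstep
    rw [cnt_eq_sum, Finset.sum_empty, ← hstep]
    ring_nf
    simp [mul_two, CharTwo.add_self_eq_zero]

/-! ### global assembly helpers -/

lemma cast_eq_one_iff_odd (n : ℕ) : (n : ZMod 2) = 1 ↔ Odd n := by
  rcases Nat.even_or_odd n with h | h
  · obtain ⟨m, rfl⟩ := h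
    have hc : ((m + m : ℕ) : ZMod 2) = 0 := by
      push_cast
      exact CharTwo.add_self_eq_zero _
    rw [hc]
    simp [Nat.odd_iff]
    omega
  · obtain ⟨m, rfl⟩ := h
    have hc : ((2 * m + 1 : ℕ) : ZMod 2) = 1 := by
      push_cast
      rw [show (2 : ZMod 2) = 0 by decide]
      ring
    rw [hc]
    simp [Nat.odd_iff]

lemma odd_ite_cast (n : ℕ) : (if Odd n then (1 : ZMod 2) else 0) = (n : ZMod 2) := by
  by_cases h : Odd n
  · rw [if_pos h, ((cast_eq_one_iff_odd n).mpr h)]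
  · rw [if_neg h]
    rcases Nat.even_or_odd n with he | ho
    · obtain ⟨m, rfl⟩ := he
      push_cast
      exact (CharTwo.add_self_eq_zero _).symm
    · exact absurd ho h

lemma nat_telescope (g : ℕ → ZMod 2) (k : ℕ) :
    ∑ j ∈ Finset.range k, (g j + g (j + 1)) = g 0 + g k := by
  induction k with
  | zero => simp; exact (CharTwo.add_self_eq_zero _).symm
  | succ n ih =>
    rw [Finset.sum_range_succ, ih]
    have : g 0 + g n + (g n + g (n + 1)) = g 0 + g (n + 1) + (g n + g n) := by ring
    rw [this, CharTwo.add_self_eq_zero, add_zero]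

lemma cnt_bigS (F : ℕ → Finset Sq) (k : ℕ) (e : Sym2 V) :
    cnt ((((Finset.range k).biUnion F)).filter
      (fun q => Odd (((Finset.range k).filter (fun j => q ∈ F j)).card))) e
    = ∑ j ∈ Finset.range k, cnt (F j) e := by
  rw [cnt_eq_sum, Finset.sum_filter]
  have hpt : ∀ q : Sq, (if Odd (((Finset.range k).filter (fun j => q ∈ F j)).card)
      then (if e ∈ squareEdges q then (1 : ZMod 2) else 0) else 0)
      = ∑ j ∈ Finset.range k,
          (if q ∈ F j then (1 : ZMod 2) else 0) * (if e ∈ squareEdges q then 1 else 0) := by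
    intro q
    rw [← Finset.sum_mul]
    have hcast : ∑ j ∈ Finset.range k, (if q ∈ F j then (1 : ZMod 2) else 0)
        = ((((Finset.range k).filter (fun j => q ∈ F j)).card : ℕ) : ZMod 2) := by
      rw [Finset.card_filter, Nat.cast_sum]
      simp
    rw [hcast, ← odd_ite_cast]
    by_cases h : Odd (((Finset.range k).filter (fun j => q ∈ F j)).card) <;> simp [h]
  rw [Finset.sum_congr rfl (fun q _ => hpt q), Finset.sum_comm]
  refine Finset.sum_congr rfl (fun j hj => ?_)
  have hsub : F j ⊆ (Finset.range k).biUnion F := Finset.subset_biUnion_of_mem F hj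
  rw [cnt_eq_sum]
  have : ∑ q ∈ (Finset.range k).biUnion F,
      (if q ∈ F j then (1 : ZMod 2) else 0) * (if e ∈ squareEdges q then 1 else 0)
      = ∑ q ∈ ((Finset.range k).biUnion F).filter (fun q => q ∈ F j),
          (if e ∈ squareEdges q then (1 : ZMod 2) else 0) := by
    rw [Finset.sum_filter]
    refine Finset.sum_congr rfl (fun q _ => ?_)
    by_cases h : q ∈ F j <;> simp [h]
  rw [this, Finset.filter_mem_eq_inter, Finset.inter_eq_right.mpr hsub]

lemma median (T : Finset ℕ) (c : ℕ → ℤ) (L M : ℤ)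
    (hL : ∀ j ∈ T, L ≤ c j) (hM : ∀ j ∈ T, c j ≤ M) :
    ∃ b : ℤ, 2 * ∑ j ∈ T, |c j - b| ≤ T.card * (M - L) := by
  have hid : ∑ j ∈ T, |c j - L| + ∑ j ∈ T, |c j - M| = T.card * (M - L) := by
    rw [← Finset.sum_add_distrib]
    have : ∀ j ∈ T, |c j - L| + |c j - M| = M - L := by
      intro j hj
      rw [abs_of_nonneg (by linarith [hL j hj]), abs_of_nonpos (by linarith [hM j hj])]
      ring
    rw [Finset.sum_congr rfl this, Finset.sum_const, nsmul_eq_mul]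
  rcases le_total (∑ j ∈ T, |c j - L|) (∑ j ∈ T, |c j - M|) with h | h
  · exact ⟨L, by linarith⟩
  · exact ⟨M, by linarith⟩

lemma var_le (c : ℕ → ℤ) (d : ℕ → ℕ) (p : ℕ) :
    ∀ q, p ≤ q → (∀ j, p ≤ j → j < q → |c (j + 1) - c j| ≤ (d j : ℤ)) →
    |c q - c p| ≤ ∑ j ∈ Finset.Ico p q, (d j : ℤ) := by
  refine Nat.le_induction ?_ ?_
  · intro _; simp
  · intro n hn ih hd
    rw [Finset.sum_Ico_succ_top hn]
    have h1 := ih (fun j h1 h2 => hd j h1 (by omega))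
    have h2 := hd n hn (by omega)
    have := abs_sub_le (c (n + 1)) (c n) (c p)
    have habs : |c (n+1) - c p| ≤ |c (n+1) - c n| + |c n - c p| := abs_sub_le _ _ _
    linarith

lemma fillCol_card (w : V) (i m : Fin 3) (z1 z2 : ℤ) :
    (fillCol w i m z1 z2).card ≤ (z2 - z1).natAbs := by
  refine le_trans Finset.card_image_le ?_
  rw [Int.card_Ico]
  rcases le_total z1 z2 with h | h
  · rw [min_eq_left h, max_eq_right h]; omega
  · rw [min_eq_right h, max_eq_left h]; omega

lemma fill_card (a u : V) (i : Fin 3) :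
    (fill a u i).card ≤ (if i = 0 then (u 1 - a 1).natAbs else 0)
      + (if i = 2 then 0 else (u 2 - a 2).natAbs) := by
  rcases fin3_cases i with rfl | rfl | rfl
  · rw [fill, if_pos rfl, if_pos rfl, if_neg (by decide)]
    refine le_trans (Finset.card_union_le _ _) ?_
    exact Nat.add_le_add (fillCol_card _ _ _ _ _) (fillCol_card _ _ _ _ _)
  · rw [fill, if_neg (by decide), if_pos rfl, if_neg (by decide), if_neg (by decide)]
    simpa using fillCol_card (pt (u 0) (u 1) 0) 1 2 (a 2) (u 2)
  · rw [fill, if_neg (by decide), if_neg (by decide), if_neg (by decide), if_pos rfl]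
    simp

end Iso


open Iso

/-- **Discrete isoperimetric inequality.** For every simple closed curve `γ` of length `k`
in `ℤ³` there is a finite set `S` of unit lattice squares whose boundary (edges contained
in an odd number of squares of `S`) is exactly the edge set of `γ`, with
`|S| ≤ (1/8)·k²`. -/
theorem statement2 (k : ℕ) (hk : 4 ≤ k) (x : ℕ → V)
    (hclosed : x k = x 0)
    (hinj : ∀ a b : ℕ, a < k → b < k → x a = x b → a = b)
    (hadj : ∀ j : ℕ, j < k → Adj (x j) (x (j + 1))) :
    ∃ S : Finset (V × Fin 3 × Fin 3),
      (∀ q ∈ S, q.2.1 < q.2.2) ∧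
      (∀ e : Sym2 V,
        (Odd (S.filter fun q => e ∈ squareEdges q).card ↔ ∃ j < k, e = s(x j, x (j + 1)))) ∧
      8 * S.card ≤ k ^ 2 := by
  classical
  -- normalize each step of the curve
  have H : ∀ j : ℕ, ∃ (i : Fin 3) (u : V), j < k →
      s(x j, x (j + 1)) = s(u, u + unitVec i)
        ∧ (∀ m, m ≠ i → u m = x j m)
        ∧ (∀ m, m ≠ i → x (j + 1) m = x j m)
        ∧ |x (j + 1) i - x j i| ≤ 1 := by
    intro j
    by_cases hj : j < k
    · obtain ⟨i, hi⟩ := hadj j hj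
      rcases hi with hi | hi
      · refine ⟨i, x j, fun _ => ⟨by rw [hi], fun m _ => rfl, ?_, ?_⟩⟩
        · intro m hm
          rw [hi, coord_add, unitVec_ne i m hm, add_zero]
        · rw [hi, coord_add, unitVec_same]
          simp
      · refine ⟨i, x (j + 1), fun _ => ⟨?_, ?_, ?_, ?_⟩⟩
        · rw [hi]
          exact Sym2.eq_swap
        · intro m hm
          rw [hi, coord_add, unitVec_ne i m hm, add_zero]
        · intro m hm
          rw [hi, coord_add, unitVec_ne i m hm, add_zero]
        · have := congrFun hi i
          rw [coord_add, unitVec_same] at this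
          rw [show x (j+1) i - x j i = -1 by omega]
          norm_num
    · exact ⟨0, x j, fun h => absurd h hj⟩
  choose dir uu hH using H
  -- directional counts
  set dc : Fin 3 → ℕ := fun m => ((Finset.range k).filter (fun j => dir j = m)).card with hdc
  -- coordinate range bounds
  have hrange : ∀ m : Fin 3, ∃ L M : ℤ,
      (∀ j ∈ Finset.range k, L ≤ x j m ∧ x j m ≤ M) ∧ 2 * (M - L) ≤ (dc m : ℤ) := by
    intro m
    have hIne : (Finset.range k).Nonempty := ⟨0, Finset.mem_range.mpr (by omega)⟩
    have hne : ((Finset.range k).image (fun j => x j m)).Nonempty := hIne.image _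
    set L := ((Finset.range k).image (fun j => x j m)).min' hne with hL
    set M := ((Finset.range k).image (fun j => x j m)).max' hne with hM
    obtain ⟨jmin, hjmin, hjminEq⟩ := Finset.mem_image.mp (Finset.min'_mem _ hne)
    obtain ⟨jmax, hjmax, hjmaxEq⟩ := Finset.mem_image.mp (Finset.max'_mem _ hne)
    have hjmink : jmin < k := Finset.mem_range.mp hjmin
    have hjmaxk : jmax < k := Finset.mem_range.mp hjmax
    refine ⟨L, M, fun j hj => ⟨Finset.min'_le _ _ (Finset.mem_image_of_mem _ hj),
      Finset.le_max' _ (x j m) (Finset.mem_image_of_mem (fun j => x j m) hj)⟩, ?_⟩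
    have hLM : L ≤ M := Finset.min'_le _ _ (Finset.max'_mem _ hne)
    set d : ℕ → ℕ := fun j => if dir j = m then 1 else 0 with hd
    have hstep : ∀ j, j < k → |x (j + 1) m - x j m| ≤ (d j : ℤ) := by
      intro j hjk
      obtain ⟨-, -, hmov, habs⟩ := hH j hjk
      by_cases hdj : dir j = m
      · rw [hdj] at habs
        simp only [hd, if_pos hdj]
        exact_mod_cast habs
      · rw [hmov m (fun h => hdj h.symm)]
        simp [hd, hdj]
    set p := min jmin jmax with hp
    set q := max jmin jmax with hq
    have hpk : p < k := by omega
    have hqk : q < k := by omega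
    have hpq : p ≤ q := min_le_max
    have v1 := var_le (fun j => x j m) d 0 p (by omega) (fun j h1 h2 => hstep j (by omega))
    have v2 := var_le (fun j => x j m) d p q hpq (fun j h1 h2 => hstep j (by omega))
    have v3 := var_le (fun j => x j m) d q k (by omega) (fun j h1 h2 => hstep j h2)
    have hMform : |x q m - x p m| = M - L := by
      rcases le_total jmin jmax with h | h
      · rw [hp, hq, min_eq_left h, max_eq_right h, hjmaxEq, hjminEq]
        rw [abs_of_nonneg (by omega)]
      · rw [hp, hq, min_eq_right h, max_eq_left h, hjminEq, hjmaxEq]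
        rw [abs_of_nonpos (by omega)]
        ring
    have htri : M - L ≤ |x p m - x 0 m| + |x k m - x q m| := by
      rw [hclosed]
      have h1 : |x p m - x q m| = M - L := by
        rw [← hMform, abs_sub_comm]
      have h2 : |x p m - x q m| ≤ |x p m - x 0 m| + |x 0 m - x q m| := abs_sub_le _ _ _
      linarith
    have hsplit : ∑ j ∈ Finset.Ico 0 p, (d j : ℤ) + ∑ j ∈ Finset.Ico p q, (d j : ℤ)
        + ∑ j ∈ Finset.Ico q k, (d j : ℤ) = (dc m : ℤ) := by
      rw [Finset.sum_Ico_consecutive _ (by omega) hpq,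
        Finset.sum_Ico_consecutive _ (by omega) (le_of_lt hqk)]
      rw [hdc]
      simp only [Finset.card_filter]
      rw [← Finset.range_eq_Ico]
      push_cast
      refine Finset.sum_congr rfl (fun j _ => ?_)
      by_cases hdj : dir j = m <;> simp [hd, hdj]
    rw [← hsplit]
    rw [hMform] at v2
    linarith
  obtain ⟨L1, M1, hb1, hr1⟩ := hrange 1
  obtain ⟨L2, M2, hb2, hr2⟩ := hrange 2
  set T1 : Finset ℕ := (Finset.range k).filter (fun j => dir j = 0) with hT1
  set T2 : Finset ℕ := (Finset.range k).filter (fun j => ¬ dir j = 2) with hT2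
  obtain ⟨b1, hmed1⟩ := median T1 (fun j => x j 1) L1 M1
    (fun j hj => (hb1 j (Finset.mem_filter.mp hj).1).1)
    (fun j hj => (hb1 j (Finset.mem_filter.mp hj).1).2)
  obtain ⟨b2, hmed2⟩ := median T2 (fun j => x j 2) L2 M2
    (fun j hj => (hb2 j (Finset.mem_filter.mp hj).1).1)
    (fun j hj => (hb2 j (Finset.mem_filter.mp hj).1).2)
  set a : V := pt 0 b1 b2 with ha
  set F : ℕ → Finset Sq := fun j => fill a (uu j) (dir j) with hF
  refine ⟨(((Finset.range k).biUnion F)).filter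
      (fun q => Odd (((Finset.range k).filter (fun j => q ∈ F j)).card)), ?_, ?_, ?_⟩
  · -- legal squares
    intro q hq
    obtain ⟨j, hj, hqF⟩ := Finset.mem_biUnion.mp (Finset.mem_filter.mp hq).1
    exact fill_dirs _ _ _ _ hqF
  · -- boundary
    intro e
    have h1 : cnt (((Finset.range k).biUnion F).filter
        (fun q => Odd (((Finset.range k).filter (fun j => q ∈ F j)).card))) e
        = ∑ j ∈ Finset.range k, cnt (F j) e := cnt_bigS F k e
    have h2 : ∀ j ∈ Finset.range k, cnt (F j) e
        = (pathX a (x j) e + pathX a (x (j + 1)) e) + ind s(x j, x (j + 1)) e := by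
      intro j hj
      have hjk : j < k := Finset.mem_range.mp hj
      obtain ⟨hs, -, -, -⟩ := hH j hjk
      rw [hF, cnt_fill]
      rcases Sym2.eq_iff.mp hs with ⟨e1, e2⟩ | ⟨e1, e2⟩
      · rw [← e2, ← e1]
      · rw [← e1, ← e2]
        rw [show s(x (j + 1), x j) = s(x j, x (j + 1)) from Sym2.eq_swap]
        ring
    rw [Finset.sum_congr rfl h2, Finset.sum_add_distrib,
      nat_telescope (fun j => pathX a (x j) e) k, hclosed,
      CharTwo.add_self_eq_zero, zero_add] at h1
    have hdist : ∀ p q : ℕ, p < k → q < k →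
        s(x p, x (p + 1)) = s(x q, x (q + 1)) → p = q := by
      intro p q hp hq he
      rcases Sym2.eq_iff.mp he with ⟨h1', h2'⟩ | ⟨h1', h2'⟩
      · exact hinj p q hp hq h1'
      · by_cases hq1 : q + 1 = k
        · have h1'' : x p = x 0 := by rw [h1', hq1, hclosed]
          have hp0 : p = 0 := hinj p 0 hp (by omega) h1''
          by_cases hp1 : p + 1 = k
          · omega
          · have := hinj (p + 1) q (by omega) hq h2'
            omega
        · have hpq1 : p = q + 1 := hinj p (q + 1) hp (by omega) h1'
          by_cases hp1 : p + 1 = k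
          · have h0q : x 0 = x q := by rw [← hclosed, ← hp1]; exact h2'
            have := hinj 0 q (by omega) hq h0q
            omega
          · have := hinj (p + 1) q (by omega) hq h2'
            omega
    have hcard : ∑ j ∈ Finset.range k, ind s(x j, x (j + 1)) e
        = (((Finset.range k).filter (fun j => e = s(x j, x (j + 1)))).card : ZMod 2) := by
      rw [Finset.card_filter, Nat.cast_sum]
      refine Finset.sum_congr rfl (fun j _ => ?_)
      by_cases hj : e = s(x j, x (j + 1)) <;> simp [ind, hj]
    rw [hcard] at h1
    rw [← cast_eq_one_iff_odd]
    change cnt _ e = 1 ↔ _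
    rw [h1]
    by_cases hex : ∃ j, j < k ∧ e = s(x j, x (j + 1))
    · obtain ⟨j0, hj0k, hej0⟩ := hex
      have hfilter : (Finset.range k).filter (fun j => e = s(x j, x (j + 1))) = {j0} := by
        ext t
        simp only [Finset.mem_filter, Finset.mem_range, Finset.mem_singleton]
        constructor
        · rintro ⟨htk, het⟩
          exact hdist t j0 htk hj0k (het.symm.trans hej0)
        · rintro rfl
          exact ⟨hj0k, hej0⟩
      rw [hfilter, Finset.card_singleton]
      simpa using ⟨j0, hj0k, hej0⟩
    · have hfilter : (Finset.range k).filter (fun j => e = s(x j, x (j + 1))) = ∅ := by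
        ext t
        simp only [Finset.mem_filter, Finset.mem_range, Finset.notMem_empty, iff_false,
          not_and]
        intro htk het
        exact hex ⟨t, htk, het⟩
      rw [hfilter, Finset.card_empty]
      constructor
      · intro h0
        exact absurd h0 (by decide)
      · intro hcon
        obtain ⟨j, hjk, hje⟩ := hcon
        exact absurd ⟨j, hjk, hje⟩ hex
  · -- area
    have hS1 : ((((Finset.range k).biUnion F)).filter
        (fun q => Odd (((Finset.range k).filter (fun j => q ∈ F j)).card))).card
        ≤ ∑ j ∈ Finset.range k, (F j).card :=
      le_trans (Finset.card_filter_le _ _) (Finset.card_biUnion_le)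
    have hFj : ∀ j ∈ Finset.range k, (F j).card ≤
        (if dir j = 0 then (x j 1 - b1).natAbs else 0)
          + (if dir j = 2 then 0 else (x j 2 - b2).natAbs) := by
      intro j hj
      have hjk := Finset.mem_range.mp hj
      obtain ⟨-, hu, -, -⟩ := hH j hjk
      have hcard := fill_card a (uu j) (dir j)
      have hFj0 : F j = fill a (uu j) (dir j) := rfl
      rw [hFj0]
      rcases fin3_cases (dir j) with hd | hd | hd
      · have hu1 := hu 1 (by rw [hd]; decide)
        have hu2 := hu 2 (by rw [hd]; decide)
        rw [hd] at hcard ⊢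
        rw [hu1, hu2, ha] at hcard
        simpa using hcard
      · have hu2 := hu 2 (by rw [hd]; decide)
        rw [hd] at hcard ⊢
        rw [hu2, ha] at hcard
        simpa using hcard
      · rw [hd] at hcard ⊢
        simpa using hcard
    have hsum := le_trans hS1 (Finset.sum_le_sum hFj)
    rw [Finset.sum_add_distrib] at hsum
    have hs1 : ∑ j ∈ Finset.range k, (if dir j = 0 then (x j 1 - b1).natAbs else 0)
        = ∑ j ∈ T1, (x j 1 - b1).natAbs := (Finset.sum_filter _ _).symm
    have hs2 : ∑ j ∈ Finset.range k, (if dir j = 2 then 0 else (x j 2 - b2).natAbs)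
        = ∑ j ∈ T2, (x j 2 - b2).natAbs := by
      rw [Finset.sum_filter]
      refine Finset.sum_congr rfl fun j _ => ?_
      by_cases hdj : dir j = 2 <;> simp [hdj]
    rw [hs1, hs2] at hsum
    -- counts
    have hT2c : dc 2 + T2.card = k := by
      have := Finset.card_filter_add_card_filter_not
        (s := Finset.range k) (p := fun j => dir j = 2)
      rw [Finset.card_range] at this
      exact this
    have hdisj : Disjoint ((Finset.range k).filter (fun j => dir j = 0))
        ((Finset.range k).filter (fun j => dir j = 1)) := by
      rw [Finset.disjoint_left]
      intro t h0 h1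
      have e0 := (Finset.mem_filter.mp h0).2
      have e1 := (Finset.mem_filter.mp h1).2
      rw [e0] at e1
      exact absurd e1 (by decide)
    have hT2card : T2.card = dc 0 + dc 1 := by
      have hunion : T2 = (Finset.range k).filter (fun j => dir j = 0)
          ∪ (Finset.range k).filter (fun j => dir j = 1) := by
        ext t
        simp only [hT2, Finset.mem_filter, Finset.mem_union]
        constructor
        · rintro ⟨ht, hdt⟩
          rcases fin3_cases (dir t) with h | h | h
          · exact Or.inl ⟨ht, h⟩
          · exact Or.inr ⟨ht, h⟩
          · exact absurd h hdt
        · rintro (⟨ht, h⟩ | ⟨ht, h⟩)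
          · exact ⟨ht, by rw [h]; decide⟩
          · exact ⟨ht, by rw [h]; decide⟩
      rw [hunion, Finset.card_union_of_disjoint hdisj]
    have hdcsum : dc 0 + dc 1 + dc 2 = k := by omega
    -- move to ℤ
    have hScast : ((((((Finset.range k).biUnion F)).filter
        (fun q => Odd (((Finset.range k).filter (fun j => q ∈ F j)).card))).card : ℤ))
        ≤ ∑ j ∈ T1, |x j 1 - b1| + ∑ j ∈ T2, |x j 2 - b2| := by
      have hcast1 : ((∑ j ∈ T1, (x j 1 - b1).natAbs : ℕ) : ℤ) = ∑ j ∈ T1, |x j 1 - b1| := by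
        push_cast [Int.natCast_natAbs]
        rfl
      have hcast2 : ((∑ j ∈ T2, (x j 2 - b2).natAbs : ℕ) : ℤ) = ∑ j ∈ T2, |x j 2 - b2| := by
        push_cast [Int.natCast_natAbs]
        rfl
      have := hsum
      have hz : ((((((Finset.range k).biUnion F)).filter
          (fun q => Odd (((Finset.range k).filter (fun j => q ∈ F j)).card))).card : ℤ))
          ≤ ((∑ j ∈ T1, (x j 1 - b1).natAbs + ∑ j ∈ T2, (x j 2 - b2).natAbs : ℕ) : ℤ) := by
        exact_mod_cast this
      rw [Nat.cast_add, hcast1, hcast2] at hz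
      exact hz
    have hT1cz : (T1.card : ℤ) = (dc 0 : ℤ) := rfl
    have hT2cz : (T2.card : ℤ) = (dc 0 : ℤ) + (dc 1 : ℤ) := by exact_mod_cast hT2card
    rw [hT1cz] at hmed1
    rw [hT2cz] at hmed2
    have hkz : (dc 0 : ℤ) + (dc 1 : ℤ) + (dc 2 : ℤ) = (k : ℤ) := by exact_mod_cast hdcsum
    have hk2 : ((k : ℤ)) ^ 2 = ((dc 0 : ℤ) + (dc 1 : ℤ) + (dc 2 : ℤ)) ^ 2 := by rw [hkz]
    have p1 : (2 * (dc 0 : ℤ)) * (2 * (M1 - L1)) ≤ (2 * (dc 0 : ℤ)) * (dc 1 : ℤ) :=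
      mul_le_mul_of_nonneg_left hr1 (by positivity)
    have p2 : (2 * ((dc 0 : ℤ) + (dc 1 : ℤ))) * (2 * (M2 - L2))
        ≤ (2 * ((dc 0 : ℤ) + (dc 1 : ℤ))) * (dc 2 : ℤ) :=
      mul_le_mul_of_nonneg_left hr2 (by positivity)
    have hfin : (8 : ℤ) * ((((Finset.range k).biUnion F)).filter
        (fun q => Odd (((Finset.range k).filter (fun j => q ∈ F j)).card))).card
        ≤ (k : ℤ) ^ 2 := by
      rw [hk2]
      have e1 : 8 * ∑ j ∈ T1, |x j 1 - b1| ≤ 2 * (dc 0 : ℤ) * (dc 1 : ℤ) := by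
        linarith [hmed1, p1]
      have e2 : 8 * ∑ j ∈ T2, |x j 2 - b2|
          ≤ 2 * ((dc 0 : ℤ) + (dc 1 : ℤ)) * (dc 2 : ℤ) := by
        linarith [hmed2, p2]
      have e3 : 2 * (dc 0 : ℤ) * (dc 1 : ℤ) + 2 * ((dc 0 : ℤ) + (dc 1 : ℤ)) * (dc 2 : ℤ)
          ≤ ((dc 0 : ℤ) + (dc 1 : ℤ) + (dc 2 : ℤ)) ^ 2 := by
        have hexp : ((dc 0 : ℤ) + (dc 1 : ℤ) + (dc 2 : ℤ)) ^ 2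
            = (dc 0 : ℤ) ^ 2 + (dc 1 : ℤ) ^ 2 + (dc 2 : ℤ) ^ 2
              + (2 * (dc 0 : ℤ) * (dc 1 : ℤ) + 2 * ((dc 0 : ℤ) + (dc 1 : ℤ)) * (dc 2 : ℤ)) := by
          ring
        linarith [sq_nonneg ((dc 0 : ℤ)), sq_nonneg ((dc 1 : ℤ)), sq_nonneg ((dc 2 : ℤ)), hexp]
      linarith [hScast, e1, e2, e3]
    exact_mod_cast hfin

end Dimers
end

section
/- Let 𝔪 be a Borel probability measure on Ω×Ω that is invariant under the diagonal translation action of ℤ³_even (i.e., the map (τ₁,τ₂) ↦ (τ₁+v, τ₂+v) preserves 𝔪 for every v ∈ ℤ³_even), and let μ₁ and μ₂ be its two marginal measures on Ω (which are invariant). Suppose that for 𝔪-almost every (τ₁,τ₂), every connected component of the graph with vertex set ℤ³ and edge set τ₁ ∪ τ₂ is finite. Then s(μ₁) = s(μ₂). -/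
/-!
The double-dimer walk `walk p = τ₂ ∘ τ₁` is a parity-preserving permutation of `ℤ³` with jumps
of size at most `2` that commutes with the diagonal translations. Mass transport therefore
gives `E[f(p, walk^k 0)] = E[f(p, 0)]` for every translation-covariant `f`, so all increments of
`k ↦ walk^k 0` have the same mean `c = E[walk 0]` and `E[walk^k 0] = k c`. The walk stays in the
component of `0` in `τ₁ ∪ τ₂`, which is a.s. finite, so `walk^k 0 / k → 0` and dominated
convergence forces `c = 0`. One more transport, with `f(p, x) = τ₂ x - x`, gives
`E[τ₁ 0] - E[walk 0] = E[τ₂ 0]`, and the mean current of a marginal is `E[τ 0]`.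
-/

open MeasureTheory Filter

namespace Dimers

theorem isTiling_translate {m : V → V} (h : IsTiling m) (v : V) :
    IsTiling fun x => m (x - v) + v := by
  obtain ⟨h1, h2⟩ := h
  constructor
  · intro x
    show Adj x (m (x - v) + v)
    obtain ⟨i, hi | hi⟩ := h1 (x - v)
    · exact ⟨i, Or.inl (by rw [hi]; abel)⟩
    · refine ⟨i, Or.inr ?_⟩
      rw [sub_eq_iff_eq_add] at hi
      exact hi.trans (by abel)
  · intro x
    show m (m (x - v) + v - v) + v = x
    have h3 : m (x - v) + v - v = m (x - v) := by abel
    rw [h3, h2]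
    abel

/-- Translation of a tiling by the vector `v`. -/
def translate (v : V) (τ : Omega) : Omega :=
  ⟨fun x => τ.1 (x - v) + v, isTiling_translate τ.2 v⟩

/-- A measure on `Omega` is invariant if it is preserved by translation by every even vector. -/
def Invariant (μ : Measure Omega) : Prop :=
  ∀ v : V, IsEven v → Measure.map (translate v) μ = μ

/-- An invariant measure is ergodic if every Borel set invariant under all even translations
has measure `0` or `1`. -/
def IsErgodicMeasure (μ : Measure Omega) : Prop :=
  Invariant μ ∧ ∀ A : Set Omega, MeasurableSet A →
    (∀ v : V, IsEven v → translate v ⁻¹' A = A) → μ A = 0 ∨ μ A = 1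

/-- The mean current of a measure on `Omega`: the `i`-th coordinate is
`μ{τ : e_i ∈ τ} − μ{τ : −e_i ∈ τ}`. -/
noncomputable def meanCurrent (μ : Measure Omega) : Fin 3 → ℝ := fun i =>
  (μ {τ : Omega | τ.1 0 = unitVec i}).toReal - (μ {τ : Omega | τ.1 0 = -unitVec i}).toReal

/-- The mean-current octahedron `O`. -/
def Oct : Set (Fin 3 → ℝ) := {s | |s 0| + |s 1| + |s 2| ≤ 1}

/-- The Shannon entropy `H_Λ(μ)` of the restriction of `μ` to the finite window `Λ`
(the restriction of a tiling to `Λ` records the partner of every vertex of `Λ`, i.e. all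
edges with at least one endpoint in `Λ`). -/
noncomputable def boxEntropy (Λ : Finset V) (μ : Measure Omega) : ℝ :=
  ∑' σ : (↥Λ → V), Real.negMulLog (μ {τ : Omega | ∀ x : ↥Λ, τ.1 x.1 = σ x}).toReal

/-- The cube `Λ_n = ([-n,n] ∩ ℤ)³`. -/
noncomputable def cube (n : ℕ) : Finset V := Fintype.piFinset fun _ : Fin 3 => Finset.Icc (-(n : ℤ)) (n : ℤ)

/-- The specific entropy (entropy per site) of a measure on `Omega`. -/
noncomputable def specificEntropy (μ : Measure Omega) : ℝ :=
  limsup (fun n : ℕ => boxEntropy (cube n) μ / ((cube n).card : ℝ)) atTop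

/-- The mean-current entropy function `ent`. -/
noncomputable def ent (s : Fin 3 → ℝ) : ℝ :=
  sSup {h : ℝ | ∃ μ : Measure Omega, IsProbabilityMeasure μ ∧ Invariant μ ∧
    meanCurrent μ = s ∧ specificEntropy μ = h}

/-- The uniform Gibbs condition in the finite window `Λ`: any two boundary-compatible
configurations (tilings whose symmetric difference consists of edges with both endpoints
in `Λ`) give cylinder sets of equal measure. -/
def GibbsCond (μ : Measure Omega) (Λ : Finset V) : Prop :=
  ∀ τ τ' : Omega,
    (∀ x : V, τ.1 x ≠ τ'.1 x → x ∈ Λ ∧ τ.1 x ∈ Λ ∧ τ'.1 x ∈ Λ) →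
    μ {σ : Omega | ∀ x ∈ Λ, σ.1 x = τ.1 x} = μ {σ : Omega | ∀ x ∈ Λ, σ.1 x = τ'.1 x}

/-- A (uniform) Gibbs measure. -/
def IsGibbs (μ : Measure Omega) : Prop :=
  Invariant μ ∧ ∀ Λ : Finset V, GibbsCond μ Λ

/-- The graph on `ℤ³` whose edge set is the union `τ₁ ∪ τ₂` of the two tilings. -/
def unionGraph (τ₁ τ₂ : Omega) : SimpleGraph V where
  Adj x y := x ≠ y ∧ (τ₁.1 x = y ∨ τ₂.1 x = y)
  symm := by
    constructor
    rintro x y ⟨hxy, h | h⟩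
    · exact ⟨Ne.symm hxy, Or.inl (by rw [← h, τ₁.2.2])⟩
    · exact ⟨Ne.symm hxy, Or.inr (by rw [← h, τ₂.2.2])⟩
  loopless := by constructor; rintro x ⟨h, -⟩; exact h rfl

lemma Adj.ne {x y : V} (h : Adj x y) : x ≠ y := by
  obtain ⟨a, rfl | rfl⟩ := h <;> intro hxy <;>
    [have := congrFun hxy a; have := congrFun hxy.symm a] <;>
    simp [unitVec] at this

lemma Adj.isEven_iff {x y : V} (h : Adj x y) : IsEven y ↔ ¬ IsEven x := by
  obtain ⟨a, rfl | rfl⟩ := h <;> fin_cases a <;> simp [IsEven, unitVec] <;> omega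

lemma mem_cube {x : V} {r : ℕ} : x ∈ cube r ↔ ∀ j, |x j| ≤ r := by
  simp [cube, abs_le]

lemma Adj.sub_mem_cube_one {x y : V} (h : Adj x y) : y - x ∈ cube 1 := by
  refine mem_cube.2 fun j => ?_
  obtain ⟨a, rfl | rfl⟩ := h <;> by_cases hj : j = a <;> simp [unitVec, hj]

lemma add_mem_cube {x y : V} {r s : ℕ} (hx : x ∈ cube r) (hy : y ∈ cube s) :
    x + y ∈ cube (r + s) := by
  rw [mem_cube] at *
  intro j
  push_cast
  exact (abs_add_le _ _).trans (add_le_add (hx j) (hy j))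

lemma abs_coord_le_of_mem_cube {x : V} {r : ℕ} (hx : x ∈ cube r) (i : Fin 3) :
    |(x i : ℝ)| ≤ r := by
  exact_mod_cast mem_cube.1 hx i

lemma coord_eq_of_adj_zero {y : V} (h : Adj 0 y) (i : Fin 3) :
    (y i : ℝ) = (if y = unitVec i then 1 else 0) - (if y = -unitVec i then 1 else 0) := by
  obtain ⟨a, rfl | h⟩ := h
  · fin_cases a <;> fin_cases i <;> simp [unitVec, funext_iff, Fin.forall_fin_succ]
  · rw [eq_neg_of_add_eq_zero_left h.symm]
    fin_cases a <;> fin_cases i <;> simp [unitVec, funext_iff, Fin.forall_fin_succ]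

lemma measurable_apply_of_countable {α β γ : Type*} [MeasurableSpace α] [MeasurableSpace β]
    [MeasurableSpace γ] [Countable β] [MeasurableSingletonClass β] {F : α → β → γ}
    (hF : ∀ y, Measurable fun a => F a y) {g : α → β} (hg : Measurable g) :
    Measurable fun a => F a (g a) :=
  (measurable_from_prod_countable_left (f := fun q : α × β => F q.1 q.2) hF).comp
    (measurable_id.prodMk hg)

lemma measurable_apply (x : V) : Measurable fun τ : Omega => τ.1 x :=
  (measurable_pi_apply x).comp measurable_subtype_coe

lemma measurable_translate (v : V) : Measurable (translate v) :=
  (measurable_pi_lambda _ fun x =>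
    (measurable_of_countable (· + v)).comp (measurable_apply (x - v))).subtype_mk

lemma translate_apply_add (v : V) (τ : Omega) (x : V) :
    (translate v τ).1 (x + v) = τ.1 x + v := by
  simp [translate]

lemma meanCurrent_eq_integral (μ : Measure Omega) [IsFiniteMeasure μ] (i : Fin 3) :
    meanCurrent μ i = ∫ τ, (τ.1 0 i : ℝ) ∂μ := by
  have hA : MeasurableSet {τ : Omega | τ.1 0 = unitVec i} :=
    measurable_apply 0 (measurableSet_singleton _)
  have hB : MeasurableSet {τ : Omega | τ.1 0 = -unitVec i} :=
    measurable_apply 0 (measurableSet_singleton _)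
  have hcoord : (fun τ : Omega => (τ.1 0 i : ℝ)) =
      fun τ => {τ : Omega | τ.1 0 = unitVec i}.indicator 1 τ -
        {τ : Omega | τ.1 0 = -unitVec i}.indicator 1 τ := by
    funext τ
    simp only [Set.indicator_apply, Pi.one_apply]
    exact coord_eq_of_adj_zero (τ.2.1 0) i
  rw [hcoord, integral_sub ((integrable_const 1).indicator hA) ((integrable_const 1).indicator hB),
    integral_indicator_one hA, integral_indicator_one hB]
  rfl

lemma meanCurrent_map_eq_integral {α : Type*} [MeasurableSpace α] (m : Measure α)
    [IsFiniteMeasure m] {π : α → Omega} (hπ : Measurable π) (i : Fin 3) :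
    meanCurrent (m.map π) i = ∫ a, ((π a).1 0 i : ℝ) ∂m := by
  rw [meanCurrent_eq_integral, integral_map hπ.aemeasurable]
  exact ((measurable_of_countable fun y : V => (y i : ℝ)).comp
    (measurable_apply 0)).aestronglyMeasurable

lemma integrable_coord_of_mem_cube {α : Type*} [MeasurableSpace α] {m : Measure α}
    [IsFiniteMeasure m] {G : α → V} (hG : Measurable G) {r : ℕ} (hr : ∀ a, G a ∈ cube r)
    (i : Fin 3) : Integrable (fun a => (G a i : ℝ)) m :=
  .of_bound ((measurable_of_countable fun y : V => (y i : ℝ)).comp hG).aestronglyMeasurable r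
    (ae_of_all _ fun a => abs_coord_le_of_mem_cube (hr a) i)

/-- Mass transport. Split according to the target `v = g a 0`, which ranges over finitely many
even sites; translating by `v` turns the event `g a 0 = v` into `g a (-v) = 0`, and exactly one
such `v` exists since `g a` is a bijection. -/
theorem integral_apply_perm_apply_zero {α : Type*} [MeasurableSpace α] {m : Measure α}
    {T : V → α → α} (hT : ∀ v, IsEven v → MeasurePreserving (T v) m m)
    {g : α → Equiv.Perm V} (hg_meas : ∀ x, Measurable fun a => g a x)
    (hg_cov : ∀ v, IsEven v → ∀ a x, g (T v a) (x + v) = g a x + v)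
    (hg_even : ∀ a x, IsEven (g a x) ↔ IsEven x) {r : ℕ} (hg_disp : ∀ a x, g a x - x ∈ cube r)
    {f : α → V → ℝ} (hf_int : ∀ x, Integrable (fun a => f a x) m)
    (hf_cov : ∀ v, IsEven v → ∀ a x, f (T v a) (x + v) = f a x) :
    ∫ a, f a (g a 0) ∂m = ∫ a, f a 0 ∂m := by
  classical
  set S := (cube r).filter IsEven
  set out : V → α → ℝ := fun v => {a | g a 0 = v}.indicator fun a => f a v
  set into : V → α → ℝ := fun v => {a | g a (-v) = 0}.indicator fun a => f a 0
  have hout_int : ∀ v, Integrable (out v) m := fun v =>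
    (hf_int v).indicator (hg_meas 0 (measurableSet_singleton v))
  have hinto_int : ∀ v, Integrable (into v) m := fun v =>
    (hf_int 0).indicator (hg_meas (-v) (measurableSet_singleton 0))
  have hout_sum : ∀ a, f a (g a 0) = ∑ v ∈ S, out v a := fun a => by
    have hmem : g a 0 ∈ S := Finset.mem_filter.2
      ⟨by simpa using hg_disp a 0, (hg_even a 0).2 (by simp [IsEven])⟩
    simp [out, Set.indicator_apply, Finset.sum_ite_eq, hmem]
  have hinto_sum : ∀ a, f a 0 = ∑ v ∈ S, into v a := fun a => by
    have hmem : -(g a).symm 0 ∈ S := by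
      have hdisp := hg_disp a ((g a).symm 0)
      have heven := hg_even a ((g a).symm 0)
      rw [Equiv.apply_symm_apply] at hdisp heven
      rw [zero_sub] at hdisp
      refine Finset.mem_filter.2 ⟨hdisp, ?_⟩
      simp only [IsEven, Pi.neg_apply, Pi.zero_apply] at heven ⊢
      omega
    have hiff : ∀ v, g a (-v) = 0 ↔ -(g a).symm 0 = v := fun v => by
      rw [← Equiv.eq_symm_apply, neg_eq_iff_eq_neg, eq_comm]
    simp only [into, Set.indicator_apply, Set.mem_ofPred_eq, hiff]
    rw [Finset.sum_ite_eq, if_pos hmem]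
  have htransport : ∀ v ∈ S, ∫ a, out v a ∂m = ∫ a, into v a ∂m := fun v hv => by
    have hv : IsEven v := (Finset.mem_filter.1 hv).2
    have hcomp : out v ∘ T v = into v := funext fun a => by
      have hg0 : g (T v a) 0 = g a (-v) + v := by simpa using hg_cov v hv a (-v)
      have hf0 : f (T v a) v = f a 0 := by simpa using hf_cov v hv a 0
      simp [out, into, Set.indicator_apply, hg0, hf0]
    rw [← hcomp]
    change _ = ∫ a, out v (T v a) ∂m
    rw [← integral_map (hT v hv).measurable.aemeasurable, (hT v hv).map_eq]
    rw [(hT v hv).map_eq]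
    exact (hout_int v).aestronglyMeasurable
  calc ∫ a, f a (g a 0) ∂m = ∑ v ∈ S, ∫ a, out v a ∂m := by
        simp only [hout_sum]; exact integral_finsetSum S fun v _ => hout_int v
    _ = ∑ v ∈ S, ∫ a, into v a ∂m := Finset.sum_congr rfl htransport
    _ = ∫ a, f a 0 ∂m := by
        simp only [hinto_sum]; exact (integral_finsetSum S fun v _ => hinto_int v).symm

theorem eq_zero_of_integral_eq_mul_of_ae_bounded {α : Type*} [MeasurableSpace α]
    {m : Measure α} [IsFiniteMeasure m] {F : ℕ → α → ℝ} {C c : ℝ}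
    (hF_meas : ∀ n, AEStronglyMeasurable (F n) m) (hF_le : ∀ n a, |F n a| ≤ C * n)
    (hF_int : ∀ n, ∫ a, F n a ∂m = n * c) (hF_bdd : ∀ᵐ a ∂m, ∃ M, ∀ n, |F n a| ≤ M) :
    c = 0 := by
  have havg_le : ∀ n a, ‖F n a / n‖ ≤ |C| := fun n a => by
    rcases Nat.eq_zero_or_pos n with rfl | hn
    · simp
    · rw [Real.norm_eq_abs, abs_div, Nat.abs_cast, div_le_iff₀ (by positivity)]
      exact (hF_le n a).trans (by gcongr; exact le_abs_self C)
  have havg_lim : ∀ᵐ a ∂m, Tendsto (fun n : ℕ => F n a / n) atTop (nhds 0) := by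
    filter_upwards [hF_bdd] with a ⟨M, hM⟩
    refine squeeze_zero_norm (fun n => ?_) (tendsto_const_div_atTop_nhds_zero_nat M)
    rw [Real.norm_eq_abs, abs_div, Nat.abs_cast]
    exact div_le_div_of_nonneg_right (hM n) n.cast_nonneg
  have hlim : Tendsto (fun n : ℕ => ∫ a, F n a / n ∂m) atTop (nhds 0) := by
    simpa using tendsto_integral_of_dominated_convergence (fun _ => |C|)
      (fun n => by fun_prop) (integrable_const _)
      (fun n => ae_of_all _ (havg_le n)) havg_lim
  refine tendsto_nhds_unique (tendsto_const_nhds.congr' ?_) hlim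
  filter_upwards [eventually_ge_atTop 1] with n hn
  rw [integral_div, hF_int, mul_div_cancel_left₀ _ (Nat.cast_ne_zero.2 (by omega))]

def walk (p : Omega × Omega) : Equiv.Perm V :=
  (Function.Involutive.toPerm p.1.1 p.1.2.2).trans (Function.Involutive.toPerm p.2.1 p.2.2.2)

lemma walk_apply (p : Omega × Omega) (x : V) : walk p x = p.2.1 (p.1.1 x) := rfl

def diagTranslate (v : V) (p : Omega × Omega) : Omega × Omega :=
  (translate v p.1, translate v p.2)

lemma measurable_diagTranslate (v : V) : Measurable (diagTranslate v) :=
  ((measurable_translate v).comp measurable_fst).prodMk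
    ((measurable_translate v).comp measurable_snd)

lemma walk_diagTranslate (v : V) (p : Omega × Omega) (x : V) :
    walk (diagTranslate v p) (x + v) = walk p x + v := by
  simp only [walk_apply, diagTranslate, translate_apply_add]

lemma walk_pow_diagTranslate (v : V) (p : Omega × Omega) (k : ℕ) (x : V) :
    (walk (diagTranslate v p) ^ k) (x + v) = (walk p ^ k) x + v := by
  induction k with
  | zero => rfl
  | succ k ih =>
    simp only [pow_succ', Equiv.Perm.mul_apply]
    rw [ih, walk_diagTranslate]

lemma isEven_walk_pow (p : Omega × Omega) (k : ℕ) (x : V) :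
    IsEven ((walk p ^ k) x) ↔ IsEven x := by
  induction k with
  | zero => rfl
  | succ k ih =>
    rw [pow_succ', Equiv.Perm.mul_apply, walk_apply, (p.2.2.1 _).isEven_iff,
      (p.1.2.1 _).isEven_iff, ih, not_not]

lemma walk_pow_sub_mem_cube (p : Omega × Omega) (k : ℕ) (x : V) :
    (walk p ^ k) x - x ∈ cube (2 * k) := by
  induction k with
  | zero => simp [mem_cube]
  | succ k ih =>
    set y := (walk p ^ k) x
    have hsplit : (walk p ^ (k + 1)) x - x =
        (p.2.1 (p.1.1 y) - p.1.1 y) + (p.1.1 y - y) + (y - x) := by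
      rw [pow_succ', Equiv.Perm.mul_apply, walk_apply]; abel
    rw [hsplit, show 2 * (k + 1) = 1 + 1 + 2 * k by ring]
    exact add_mem_cube (add_mem_cube (p.2.2.1 _).sub_mem_cube_one (p.1.2.1 _).sub_mem_cube_one) ih

lemma measurable_walk_apply (x : V) : Measurable fun p : Omega × Omega => walk p x :=
  measurable_apply_of_countable (F := fun (p : Omega × Omega) z => p.2.1 z)
    (fun z => (measurable_apply z).comp measurable_snd) ((measurable_apply x).comp measurable_fst)

lemma measurable_walk_pow_apply (k : ℕ) (x : V) :
    Measurable fun p : Omega × Omega => (walk p ^ k) x := by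
  induction k with
  | zero => exact measurable_const
  | succ k ih =>
    simp only [pow_succ', Equiv.Perm.mul_apply]
    exact measurable_apply_of_countable measurable_walk_apply ih

lemma reachable_walk_pow (p : Omega × Omega) (k : ℕ) (x : V) :
    (unionGraph p.1 p.2).Reachable x ((walk p ^ k) x) := by
  induction k with
  | zero => rfl
  | succ k ih =>
    set y := (walk p ^ k) x
    have h₁ : (unionGraph p.1 p.2).Adj y (p.1.1 y) := ⟨(p.1.2.1 y).ne, Or.inl rfl⟩
    have h₂ : (unionGraph p.1 p.2).Adj (p.1.1 y) (p.2.1 (p.1.1 y)) :=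
      ⟨(p.2.2.1 _).ne, Or.inr rfl⟩
    rw [pow_succ', Equiv.Perm.mul_apply, walk_apply]
    exact ih.trans (h₁.reachable.trans h₂.reachable)

lemma integrable_walk_pow_sub_coord (m : Measure (Omega × Omega)) [IsFiniteMeasure m] (k : ℕ)
    (x : V) (i : Fin 3) : Integrable (fun p => (((walk p ^ k) x - x) i : ℝ)) m :=
  integrable_coord_of_mem_cube ((measurable_walk_pow_apply k x).sub_const x)
    (walk_pow_sub_mem_cube · k x) i

lemma integral_apply_walk_pow_apply_zero {m : Measure (Omega × Omega)}
    (hinv : ∀ v, IsEven v → m.map (diagTranslate v) = m) (k : ℕ) {f : Omega × Omega → V → ℝ}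
    (hf_int : ∀ x, Integrable (fun p => f p x) m)
    (hf_cov : ∀ v, IsEven v → ∀ p x, f (diagTranslate v p) (x + v) = f p x) :
    ∫ p, f p ((walk p ^ k) 0) ∂m = ∫ p, f p 0 ∂m :=
  integral_apply_perm_apply_zero (fun v hv => ⟨measurable_diagTranslate v, hinv v hv⟩)
    (measurable_walk_pow_apply k) (fun v _ p x => walk_pow_diagTranslate v p k x)
    (isEven_walk_pow · k) (walk_pow_sub_mem_cube · k) hf_int hf_cov

lemma integral_walk_pow_coord {m : Measure (Omega × Omega)} [IsFiniteMeasure m]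
    (hinv : ∀ v, IsEven v → m.map (diagTranslate v) = m) (i : Fin 3) (k : ℕ) :
    ∫ p, ((walk p ^ k) 0 i : ℝ) ∂m = k * ∫ p, (walk p 0 i : ℝ) ∂m := by
  induction k with
  | zero => simp
  | succ k ih =>
    have hincr := integral_apply_walk_pow_apply_zero hinv k
      (f := fun p x => ((walk p x - x) i : ℝ))
      (by simpa using integrable_walk_pow_sub_coord m 1 · i)
      (fun v _ p x => by simp [walk_diagTranslate])
    simp only [Pi.sub_apply, Int.cast_sub, ← Equiv.Perm.mul_apply, ← pow_succ'] at hincr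
    rw [integral_sub (by simpa using integrable_walk_pow_sub_coord m (k + 1) 0 i)
      (by simpa using integrable_walk_pow_sub_coord m k 0 i), ih] at hincr
    simp only [Pi.zero_apply, Int.cast_zero, sub_zero] at hincr
    rw [Nat.cast_succ]
    linarith

lemma integral_walk_coord_eq_zero {m : Measure (Omega × Omega)} [IsFiniteMeasure m]
    (hinv : ∀ v, IsEven v → m.map (diagTranslate v) = m)
    (hfin : ∀ᵐ p ∂m, ∀ x : V, {y : V | (unionGraph p.1 p.2).Reachable x y}.Finite) (i : Fin 3) :
    ∫ p, (walk p 0 i : ℝ) ∂m = 0 := by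
  refine eq_zero_of_integral_eq_mul_of_ae_bounded (F := fun k p => ((walk p ^ k) 0 i : ℝ))
    (C := 2) (fun k => ?_) (fun k p => ?_) (integral_walk_pow_coord hinv i) ?_
  · simpa using (integrable_walk_pow_sub_coord m k 0 i).aestronglyMeasurable
  · simpa using abs_coord_le_of_mem_cube (walk_pow_sub_mem_cube p k 0) i
  · filter_upwards [hfin] with p hp
    obtain ⟨M, hM⟩ := ((hp 0).image fun y : V => |(y i : ℝ)|).bddAbove
    exact ⟨M, fun k => hM ⟨_, reachable_walk_pow p k 0, rfl⟩⟩

lemma integral_fst_sub_integral_walk {m : Measure (Omega × Omega)} [IsFiniteMeasure m]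
    (hinv : ∀ v, IsEven v → m.map (diagTranslate v) = m) (i : Fin 3) :
    ∫ p, (p.1.1 0 i : ℝ) ∂m - ∫ p, (walk p 0 i : ℝ) ∂m = ∫ p, (p.2.1 0 i : ℝ) ∂m := by
  have htransport := integral_apply_walk_pow_apply_zero hinv 1
    (f := fun p x => ((p.2.1 x - x) i : ℝ))
    (fun x => integrable_coord_of_mem_cube (((measurable_apply x).comp measurable_snd).sub_const x)
      (fun p => (p.2.2.1 x).sub_mem_cube_one) i)
    (fun v _ p x => by simp [diagTranslate, translate_apply_add])
  have hback : ∀ p : Omega × Omega, p.2.1 (walk p 0) = p.1.1 0 := fun p => p.2.2.2 _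
  simp only [pow_one, hback, Pi.sub_apply, Int.cast_sub, Pi.zero_apply, sub_zero] at htransport
  rw [← htransport, integral_sub]
  · exact integrable_coord_of_mem_cube ((measurable_apply 0).comp measurable_fst)
      (fun p => by simpa using (p.1.2.1 0).sub_mem_cube_one) i
  · simpa using integrable_walk_pow_sub_coord m 1 0 i

/-- **Couplings with finite double-dimer components have equal marginal mean currents.**
If `𝔪` is a probability measure on `Omega × Omega` invariant under the diagonal translation
action of the even lattice, and for `𝔪`-a.e. `(τ₁,τ₂)` every connected component of the
graph with edge set `τ₁ ∪ τ₂` is finite, then the two marginals have the same mean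
current. -/
theorem statement8 (m : Measure (Omega × Omega)) (hprob : IsProbabilityMeasure m)
    (hinv : ∀ v : V, IsEven v →
      Measure.map (fun p : Omega × Omega => (translate v p.1, translate v p.2)) m = m)
    (hfin : ∀ᵐ p ∂m, ∀ x : V, {y : V | (unionGraph p.1 p.2).Reachable x y}.Finite) :
    meanCurrent (m.map Prod.fst) = meanCurrent (m.map Prod.snd) := by
  funext i
  rw [meanCurrent_map_eq_integral m measurable_fst, meanCurrent_map_eq_integral m measurable_snd,
    ← integral_fst_sub_integral_walk hinv i, integral_walk_coord_eq_zero hinv hfin i, sub_zero]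

end Dimers
end
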